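/- Let f : [0,1]² → ℝ be a bounded, continuous, strictly positive density and let r, c : [0,1] → ℝ be strictly positive continuous functions with ∫₀¹ r(y) dy = ∫₀¹ c(x) dx. Then there exist strictly positive functions h₁, h₂ on [0,1] such that p(x,y) = h₁(x) f(x,y) h₂(y) satisfies ∫₀¹ p(x,y) dx = r(y) for all y and ∫₀¹ p(x,y) dy = c(x) for all x; the pair (h₁, h₂) is unique up to a scalar factor (if (h₁′, h₂′) also works then h₁′ = α h₁ and α h₂′ = h₂ for some α > 0). In particular, if f is symmetric (f(x,y) = f(y,x)) and r = c = m, there exists a unique strictly positive function h such that p(x,y) = h(x) f(x,y) h(y) has both marginals equal to m. -/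

import Mathlib

/-!
Write `h₂ = exp u`. Imposing the column marginals gives `h₁ = c / ∫ f h₂ dy`, and then imposing the
row marginals gives the Sinkhorn map `u ↦ log r - log ∫ f h₁ dx`; scalings are its fixed points up
to an additive constant, and equal total masses force that constant to vanish. As
`f x y ≤ θ * f x' y'`, Birkhoff's estimate bounds the oscillation of the difference of the images
of `u` and `u'` by `log (θ⁻² + (1 - θ⁻²) * exp D)`, where `D` is the oscillation of `u - u'`; by
convexity this is at most `ρ * D` with `ρ < 1` as long as `D` stays bounded. The images of the map
have bounded oscillation, so on a closed set of normalised functions some iterate of the map is a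
contraction: the fixed point exists and is unique, which is the uniqueness of the scaling up to a
factor. For symmetric `f`, `(h₂, h₁)` is a scaling too, so `h₂ = α * h₁` and `h = √α * h₁`.
-/

open MeasureTheory Set Function Real unitInterval

theorem one_le_add_mul_exp {t D : ℝ} (ht : t ≤ 1) (hD : 0 ≤ D) : 1 ≤ t + (1 - t) * exp D := by
  nlinarith [mul_nonneg (sub_nonneg.2 ht) (sub_nonneg.2 (one_le_exp hD))]

theorem log_add_mul_exp_le_mul {t C D : ℝ} (ht0 : 0 ≤ t) (ht1 : t ≤ 1) (hC : 0 < C)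
    (hD0 : 0 ≤ D) (hDC : D ≤ C) :
    log (t + (1 - t) * exp D) ≤ log (t + (1 - t) * exp C) / C * D := by
  have hs : D / C ∈ Icc (0 : ℝ) 1 := ⟨by positivity, (div_le_one hC).2 hDC⟩
  have hconc := (concaveOn_rpow hs.1 hs.2).2 (mem_Ici.2 zero_le_one) (mem_Ici.2 (exp_pos C).le)
    ht0 (sub_nonneg.2 ht1) (add_sub_cancel t 1)
  simp only [smul_eq_mul, one_rpow, mul_one, ← exp_mul, mul_div_cancel₀ D hC.ne'] at hconc
  calc log (t + (1 - t) * exp D) ≤ log ((t + (1 - t) * exp C) ^ (D / C)) :=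
        log_le_log (one_pos.trans_le (one_le_add_mul_exp ht1 hD0)) hconc
    _ = log (t + (1 - t) * exp C) / C * D := by
        rw [log_rpow (one_pos.trans_le (one_le_add_mul_exp ht1 hC.le))]; ring

/-- The slope of the chord over `[0, C]` of the convex function
`D ↦ log (θ⁻² + (1 - θ⁻²) * exp D)`, which vanishes at `0`. -/
noncomputable def contractionRatio (θ C : ℝ) : ℝ :=
  log (θ⁻¹ ^ 2 + (1 - θ⁻¹ ^ 2) * exp C) / C

theorem inv_sq_le_one {θ : ℝ} (hθ : 1 ≤ θ) : θ⁻¹ ^ 2 ≤ 1 :=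
  pow_le_one₀ (by positivity) (inv_le_one_of_one_le₀ hθ)

theorem contractionRatio_nonneg {θ C : ℝ} (hθ : 1 ≤ θ) (hC : 0 < C) :
    0 ≤ contractionRatio θ C :=
  div_nonneg (log_nonneg (one_le_add_mul_exp (inv_sq_le_one hθ) hC.le)) hC.le

theorem contractionRatio_lt_one {θ C : ℝ} (hθ : 1 ≤ θ) (hC : 0 < C) :
    contractionRatio θ C < 1 := by
  rw [contractionRatio, div_lt_one hC,
    log_lt_iff_lt_exp (one_pos.trans_le (one_le_add_mul_exp (inv_sq_le_one hθ) hC.le))]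
  have : 0 < θ⁻¹ ^ 2 := by positivity
  nlinarith [one_lt_exp_iff.2 hC]

/-- If `p / ∫ p ≥ t * q / ∫ q`, the `p`- and `q`-weighted averages of `φ ∈ [m, M]` have ratio at
most `t + (1 - t) * M / m`. -/
theorem mul_integral_mul_le {a b t m M : ℝ} {p q φ : ℝ → ℝ} (hab : a ≤ b)
    (hp : IntervalIntegrable p volume a b) (hq : IntervalIntegrable q volume a b)
    (hpφ : IntervalIntegrable (fun x ↦ p x * φ x) volume a b)
    (hqφ : IntervalIntegrable (fun x ↦ q x * φ x) volume a b)
    (hp0 : ∀ x ∈ Icc a b, 0 ≤ p x) (hq0 : ∀ x ∈ Icc a b, 0 ≤ q x) (ht : t ≤ 1) (hm : 0 < m)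
    (hφ : ∀ x ∈ Icc a b, m ≤ φ x ∧ φ x ≤ M)
    (hdom : ∀ x ∈ Icc a b, t * (∫ x in a..b, p x) * q x ≤ (∫ x in a..b, q x) * p x) :
    (∫ x in a..b, q x) * (∫ x in a..b, p x * φ x) ≤
      (t + (1 - t) * (M / m)) * (∫ x in a..b, p x) * ∫ x in a..b, q x * φ x := by
  set P := ∫ x in a..b, p x
  set Q := ∫ x in a..b, q x
  have hP : 0 ≤ P := intervalIntegral.integral_nonneg hab hp0
  have hMm : 0 ≤ M / m := div_nonneg (hm.le.trans ((hφ a ⟨le_rfl, hab⟩).1.trans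
    (hφ a ⟨le_rfl, hab⟩).2)) hm.le
  -- Split `Q * p = t * P * q + (Q * p - t * P * q)` and bound `φ ≤ M` on the nonnegative part.
  have hsplit : Q * ∫ x in a..b, p x * φ x ≤
      t * P * (∫ x in a..b, q x * φ x) + M * (Q * P - t * P * Q) := by
    have hrhs := (hqφ.const_mul (t * P)).add ((hp.const_mul (M * Q)).sub (hq.const_mul (M * t * P)))
    have := intervalIntegral.integral_mono_on hab (hpφ.const_mul Q) hrhs fun x hx ↦
      show Q * (p x * φ x) ≤ t * P * (q x * φ x) + (M * Q * p x - M * t * P * q x) by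
        nlinarith [mul_le_mul_of_nonneg_left (hφ x hx).2 (sub_nonneg.2 (hdom x hx))]
    rw [intervalIntegral.integral_add (hqφ.const_mul _) ((hp.const_mul _).sub (hq.const_mul _)),
      intervalIntegral.integral_sub (hp.const_mul _) (hq.const_mul _)] at this
    simp only [intervalIntegral.integral_const_mul] at this
    linarith
  have hlow : m * Q ≤ ∫ x in a..b, q x * φ x := by
    rw [← intervalIntegral.integral_const_mul]
    exact intervalIntegral.integral_mono_on hab (hq.const_mul m) hqφ
      (fun x hx ↦ by nlinarith [hq0 x hx, (hφ x hx).1])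
  have : M * Q ≤ M / m * ∫ x in a..b, q x * φ x := by
    calc M * Q = M / m * (m * Q) := by field_simp
      _ ≤ M / m * ∫ x in a..b, q x * φ x := mul_le_mul_of_nonneg_left hlow hMm
  nlinarith [mul_le_mul_of_nonneg_left this (mul_nonneg (sub_nonneg.2 ht) hP)]

theorem IsCompact.exists_forall_le_mul {α : Type*} [TopologicalSpace α] {K : Set α}
    {g : α → ℝ} (hK : IsCompact K) (hg : ContinuousOn g K) (hpos : ∀ x ∈ K, 0 < g x) :
    ∃ θ, ∀ x ∈ K, ∀ x' ∈ K, g x ≤ θ * g x' := by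
  rcases K.eq_empty_or_nonempty with rfl | hne
  · exact ⟨0, by simp⟩
  obtain ⟨x₀, hx₀, hmin⟩ := hK.exists_isMinOn hne hg
  obtain ⟨x₁, hx₁, hmax⟩ := hK.exists_isMaxOn hne hg
  refine ⟨g x₁ / g x₀, fun x hx x' hx' ↦ ?_⟩
  calc g x ≤ g x₁ / g x₀ * g x₀ := by rw [div_mul_cancel₀ _ (hpos x₀ hx₀).ne']; exact hmax hx
    _ ≤ g x₁ / g x₀ * g x' :=
      mul_le_mul_of_nonneg_left (hmin hx') (div_nonneg (hpos x₁ hx₁).le (hpos x₀ hx₀).le)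

/-- Some iterate of `T` is a contraction for `dist`. -/
theorem exists_unique_isFixedPt_of_gauge {E : Type*} [MetricSpace E] [CompleteSpace E]
    [Nonempty E] {T : E → E} {d : E → E → ℝ} {K ρ : ℝ} (hρ0 : 0 ≤ ρ) (hρ1 : ρ < 1)
    (hdist : ∀ x y, dist x y ≤ d x y) (hd : ∀ x y, d x y ≤ K * dist x y)
    (hT : ∀ x y, d (T x) (T y) ≤ ρ * d x y) : ∃! x, IsFixedPt T x := by
  have hiter : ∀ n x y, d (T^[n] x) (T^[n] y) ≤ ρ ^ n * d x y := by
    intro n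
    induction n with
    | zero => simp
    | succ n ih =>
      intro x y
      rw [iterate_succ_apply', iterate_succ_apply', pow_succ', mul_assoc]
      exact (hT _ _).trans (mul_le_mul_of_nonneg_left (ih x y) hρ0)
  obtain ⟨n, hn⟩ := (((tendsto_pow_atTop_nhds_zero_of_lt_one hρ0 hρ1).const_mul K).eventually
    (gt_mem_nhds (by simp : K * 0 < 1))).exists
  have hlip : LipschitzWith (K * ρ ^ n).toNNReal T^[n] := .of_dist_le' fun x y ↦
    calc dist (T^[n] x) (T^[n] y) ≤ ρ ^ n * d x y := (hdist _ _).trans (hiter n x y)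
      _ ≤ ρ ^ n * (K * dist x y) := mul_le_mul_of_nonneg_left (hd x y) (pow_nonneg hρ0 n)
      _ = K * ρ ^ n * dist x y := by ring
  have hT' : ContractingWith _ T^[n] := ⟨Real.toNNReal_lt_one.2 hn, hlip⟩
  exact ⟨_, hT'.isFixedPt_fixedPoint_iterate, fun y hy ↦ hT'.fixedPoint_unique (hy.iterate n)⟩

theorem exists_unique_isFixedPt_of_mapsTo_gauge {E : Type*} [MetricSpace E] [CompleteSpace E]
    {X : Set E} (hX : IsClosed X) (hXne : X.Nonempty) {T : E → E} (hTX : ∀ x, T x ∈ X)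
    {d : E → E → ℝ} {K ρ : ℝ} (hρ0 : 0 ≤ ρ) (hρ1 : ρ < 1)
    (hdist : ∀ x ∈ X, ∀ y ∈ X, dist x y ≤ d x y) (hd : ∀ x ∈ X, ∀ y ∈ X, d x y ≤ K * dist x y)
    (hT : ∀ x ∈ X, ∀ y ∈ X, d (T x) (T y) ≤ ρ * d x y) : ∃! x, IsFixedPt T x := by
  have : CompleteSpace X := hX.completeSpace_coe
  have : Nonempty X := hXne.to_subtype
  obtain ⟨x, hx, hx_unique⟩ := exists_unique_isFixedPt_of_gauge
    (T := fun x : X ↦ ⟨T x, hTX x⟩) (d := fun x y : X ↦ d x y) hρ0 hρ1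
    (fun x y ↦ hdist x x.2 y y.2) (fun x y ↦ hd x x.2 y y.2) (fun x y ↦ hT x x.2 y y.2)
  refine ⟨x, congrArg Subtype.val hx, fun y hy ↦ ?_⟩
  exact congrArg Subtype.val (hx_unique ⟨y, hy ▸ hTX y⟩ (Subtype.ext hy))

namespace ContinuousMap

variable {α : Type*} [TopologicalSpace α] [CompactSpace α]

theorem sub_le_diam_range (w : C(α, ℝ)) (x x' : α) : w x - w x' ≤ Metric.diam (range w) :=
  (le_abs_self _).trans <| Real.dist_eq (w x) (w x') ▸
    Metric.dist_le_diam_of_mem (isCompact_range w.continuous).isBounded (mem_range_self x)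
      (mem_range_self x')

theorem norm_le_diam_range {w : C(α, ℝ)} {x₀ : α} (h : w x₀ = 0) :
    ‖w‖ ≤ Metric.diam (range w) :=
  (norm_le _ Metric.diam_nonneg).2 fun x ↦ by
    rw [Real.norm_eq_abs, abs_le]
    constructor <;> linarith [sub_le_diam_range w x x₀, sub_le_diam_range w x₀ x]

theorem diam_range_le_two_mul_norm (w : C(α, ℝ)) : Metric.diam (range w) ≤ 2 * ‖w‖ :=
  Metric.diam_le_of_forall_dist_le (by positivity) <| by
    rintro _ ⟨x, rfl⟩ _ ⟨x', rfl⟩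
    rw [Real.dist_eq, two_mul]
    exact (abs_sub _ _).trans (add_le_add (by simpa using w.norm_coe_le_norm x)
      (by simpa using w.norm_coe_le_norm x'))

end ContinuousMap

/-- In exponential coordinates this is the Sinkhorn update `h ↦ g / ∫₀¹ k(x, ·) h(x) dx`. -/
noncomputable def sinkhornStep (k : ℝ → ℝ → ℝ) (g u : ℝ → ℝ) (y : ℝ) : ℝ :=
  log (g y) - log (∫ x in (0 : ℝ)..1, k x y * exp (u x))

section SinkhornStep

variable {k : ℝ → ℝ → ℝ} {g u u' : ℝ → ℝ} {θ : ℝ}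

theorem continuous_kernel_mul_exp (hk : Continuous (uncurry k)) (hu : Continuous u) (y : ℝ) :
    Continuous fun x ↦ k x y * exp (u x) :=
  (hk.comp (continuous_id.prodMk continuous_const)).mul (continuous_exp.comp hu)

theorem integral_kernel_mul_exp_pos (hk : Continuous (uncurry k)) (hkpos : ∀ x y, 0 < k x y)
    (hu : Continuous u) (y : ℝ) : 0 < ∫ x in (0 : ℝ)..1, k x y * exp (u x) :=
  intervalIntegral.intervalIntegral_pos_of_pos_on
    ((continuous_kernel_mul_exp hk hu y).intervalIntegrable 0 1)
    (fun x _ ↦ mul_pos (hkpos x y) (exp_pos _)) zero_lt_one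

theorem continuous_sinkhornStep (hk : Continuous (uncurry k)) (hkpos : ∀ x y, 0 < k x y)
    (hg : Continuous g) (hgpos : ∀ y, 0 < g y) (hu : Continuous u) :
    Continuous (sinkhornStep k g u) := by
  refine (hg.log fun y ↦ (hgpos y).ne').sub (Continuous.log ?_ fun y ↦
    (integral_kernel_mul_exp_pos hk hkpos hu y).ne')
  exact intervalIntegral.continuous_parametric_intervalIntegral_of_continuous'
    ((hk.comp continuous_swap).mul ((continuous_exp.comp hu).comp continuous_snd)) 0 1

theorem exp_sinkhornStep_mul_integral (hk : Continuous (uncurry k)) (hkpos : ∀ x y, 0 < k x y)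
    (hu : Continuous u) {y : ℝ} (hgy : 0 < g y) :
    exp (sinkhornStep k g u y) * ∫ x in (0 : ℝ)..1, k x y * exp (u x) = g y := by
  rw [sinkhornStep, exp_sub, exp_log hgy, exp_log (integral_kernel_mul_exp_pos hk hkpos hu y),
    div_mul_cancel₀ _ (integral_kernel_mul_exp_pos hk hkpos hu y).ne']

theorem one_le_of_forall_le_mul (hkpos : ∀ x y, 0 < k x y)
    (hkθ : ∀ x y y', k x y ≤ θ * k x y') : 1 ≤ θ :=
  (le_mul_iff_one_le_left (hkpos 0 0)).1 (hkθ 0 0 0)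

theorem integral_kernel_mul_exp_le (hk : Continuous (uncurry k))
    (hkθ : ∀ x y y', k x y ≤ θ * k x y') (hu : Continuous u) (y y' : ℝ) :
    ∫ x in (0 : ℝ)..1, k x y * exp (u x) ≤ θ * ∫ x in (0 : ℝ)..1, k x y' * exp (u x) := by
  rw [← intervalIntegral.integral_const_mul]
  exact intervalIntegral.integral_mono_on zero_le_one
    ((continuous_kernel_mul_exp hk hu y).intervalIntegrable 0 1)
    ((continuous_kernel_mul_exp hk hu y').intervalIntegrable 0 1 |>.const_mul θ)
    fun x _ ↦ by rw [← mul_assoc]; exact mul_le_mul_of_nonneg_right (hkθ x y y') (exp_pos _).le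

theorem sinkhornStep_sub_sinkhornStep_le (hk : Continuous (uncurry k))
    (hkpos : ∀ x y, 0 < k x y) (hkθ : ∀ x y y', k x y ≤ θ * k x y') (hu : Continuous u)
    (y y' : ℝ) :
    sinkhornStep k g u y - sinkhornStep k g u y' ≤ log (g y) - log (g y') + log θ := by
  have hθ : 0 < θ := one_pos.trans_le (one_le_of_forall_le_mul hkpos hkθ)
  have := log_le_log (integral_kernel_mul_exp_pos hk hkpos hu y')
    (integral_kernel_mul_exp_le hk hkθ hu y' y)
  rw [log_mul hθ.ne' (integral_kernel_mul_exp_pos hk hkpos hu y).ne'] at this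
  simp only [sinkhornStep]
  linarith

/-- Birkhoff's contraction estimate for one half-step. -/
theorem sinkhornStep_sub_sub_le (hk : Continuous (uncurry k))
    (hkpos : ∀ x y, 0 < k x y) (hkθ : ∀ x y y', k x y ≤ θ * k x y')
    (hu : Continuous u) (hu' : Continuous u') {D : ℝ}
    (hD : ∀ x ∈ I, ∀ x' ∈ I, (u x - u' x) - (u x' - u' x') ≤ D) (y y' : ℝ) :
    (sinkhornStep k g u y - sinkhornStep k g u' y) -
        (sinkhornStep k g u y' - sinkhornStep k g u' y') ≤
      log (θ⁻¹ ^ 2 + (1 - θ⁻¹ ^ 2) * exp D) := by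
  have hθ : 1 ≤ θ := one_le_of_forall_le_mul hkpos hkθ
  obtain ⟨x₀, hx₀, hmin⟩ := isCompact_Icc.exists_isMinOn (nonempty_Icc.2 zero_le_one)
    (hu.sub hu').continuousOn
  set L : (ℝ → ℝ) → ℝ → ℝ := fun v z ↦ ∫ x in (0 : ℝ)..1, k x z * exp (v x)
  have hL : ∀ v, Continuous v → ∀ z, 0 < L v z := fun v hv ↦ integral_kernel_mul_exp_pos hk hkpos hv
  have hint : ∀ v, Continuous v → ∀ z,
      IntervalIntegrable (fun x ↦ k x z * exp (v x)) volume 0 1 :=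
    fun v hv z ↦ (continuous_kernel_mul_exp hk hv z).intervalIntegrable 0 1
  have hexp : ∀ z, (fun x ↦ k x z * exp (u' x) * exp (u x - u' x)) = fun x ↦ k x z * exp (u x) :=
    fun z ↦ funext fun x ↦ by rw [mul_assoc, ← exp_add, add_sub_cancel]
  have hdom : ∀ x ∈ Icc (0 : ℝ) 1,
      θ⁻¹ ^ 2 * L u' y' * (k x y * exp (u' x)) ≤ L u' y * (k x y' * exp (u' x)) := by
    intro x _
    have : θ⁻¹ ^ 2 * L u' y' * k x y ≤ L u' y * k x y' :=
      calc θ⁻¹ ^ 2 * L u' y' * k x y ≤ θ⁻¹ ^ 2 * (θ * L u' y) * (θ * k x y') :=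
            mul_le_mul (mul_le_mul_of_nonneg_left (integral_kernel_mul_exp_le hk hkθ hu' y' y)
              (by positivity)) (hkθ x y y') (hkpos x y).le
              (mul_nonneg (by positivity) (mul_nonneg (by linarith) (hL u' hu' y).le))
        _ = L u' y * k x y' := by field_simp
    nlinarith [exp_pos (u' x)]
  have key := mul_integral_mul_le (m := exp (u x₀ - u' x₀)) (M := exp (u x₀ - u' x₀ + D))
    (φ := fun x ↦ exp (u x - u' x)) zero_le_one (hint u' hu' y') (hint u' hu' y)
    (by rw [hexp]; exact hint u hu y') (by rw [hexp]; exact hint u hu y)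
    (fun x _ ↦ (mul_pos (hkpos x y') (exp_pos _)).le)
    (fun x _ ↦ (mul_pos (hkpos x y) (exp_pos _)).le) (inv_sq_le_one hθ) (exp_pos _)
    (fun x hx ↦ ⟨exp_le_exp.2 (hmin hx), exp_le_exp.2 (by linarith [hD x hx x₀ hx₀])⟩) hdom
  rw [hexp, hexp, ← exp_sub, add_sub_cancel_left] at key
  change L u' y * L u y' ≤ _ * L u' y' * L u y at key
  have hc : 0 < θ⁻¹ ^ 2 + (1 - θ⁻¹ ^ 2) * exp D :=
    one_pos.trans_le (one_le_add_mul_exp (inv_sq_le_one hθ) (by linarith [hD x₀ hx₀ x₀ hx₀]))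
  have := log_le_log (mul_pos (hL u' hu' y) (hL u hu y')) key
  rw [log_mul (mul_pos hc (hL u' hu' y')).ne' (hL u hu y).ne', log_mul hc.ne' (hL u' hu' y').ne',
    log_mul (hL u' hu' y).ne' (hL u hu y').ne'] at this
  simp only [sinkhornStep]
  linarith

theorem sinkhornStep_sub_sub_le_mul (hk : Continuous (uncurry k))
    (hkpos : ∀ x y, 0 < k x y) (hkθ : ∀ x y y', k x y ≤ θ * k x y')
    (hu : Continuous u) (hu' : Continuous u') {C D : ℝ} (hC : 0 < C) (hD0 : 0 ≤ D) (hDC : D ≤ C)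
    (hD : ∀ x ∈ I, ∀ x' ∈ I, (u x - u' x) - (u x' - u' x') ≤ D) (y y' : ℝ) :
    (sinkhornStep k g u y - sinkhornStep k g u' y) -
        (sinkhornStep k g u y' - sinkhornStep k g u' y') ≤ contractionRatio θ C * D :=
  (sinkhornStep_sub_sub_le hk hkpos hkθ hu hu' hD y y').trans <| log_add_mul_exp_le_mul
    (by positivity) (inv_sq_le_one (one_le_of_forall_le_mul hkpos hkθ)) hC hD0 hDC

end SinkhornStep

noncomputable def sinkhornMap (f : ℝ → ℝ → ℝ) (r c u : ℝ → ℝ) : ℝ → ℝ :=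
  sinkhornStep f r (sinkhornStep (flip f) c u)

section SinkhornMap

variable {f : ℝ → ℝ → ℝ} {r c u u' : ℝ → ℝ} {θ : ℝ}

theorem continuous_sinkhornMap (hf : Continuous (uncurry f)) (hfpos : ∀ x y, 0 < f x y)
    (hr : Continuous r) (hrpos : ∀ y, 0 < r y) (hc : Continuous c) (hcpos : ∀ x, 0 < c x)
    (hu : Continuous u) : Continuous (sinkhornMap f r c u) :=
  continuous_sinkhornStep hf hfpos hr hrpos <|
    continuous_sinkhornStep (hf.comp continuous_swap) (fun x y ↦ hfpos y x) hc hcpos hu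

theorem sinkhornMap_sub_le (hf : Continuous (uncurry f)) (hfpos : ∀ x y, 0 < f x y)
    (hfθ : ∀ x y x' y', f x y ≤ θ * f x' y') (hc : Continuous c) (hcpos : ∀ x, 0 < c x)
    (hu : Continuous u) (y y' : ℝ) :
    sinkhornMap f r c u y - sinkhornMap f r c u y' ≤ log (r y) - log (r y') + log θ :=
  sinkhornStep_sub_sinkhornStep_le hf hfpos (fun x y y' ↦ hfθ x y x y')
    (continuous_sinkhornStep (k := flip f) (hf.comp continuous_swap) (fun x y ↦ hfpos y x) hc hcpos
      hu) y y'

theorem sinkhornMap_sub_sub_le (hf : Continuous (uncurry f)) (hfpos : ∀ x y, 0 < f x y)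
    (hfθ : ∀ x y x' y', f x y ≤ θ * f x' y') (hc : Continuous c) (hcpos : ∀ x, 0 < c x)
    (hu : Continuous u) (hu' : Continuous u') {C D : ℝ} (hC : 0 < C) (hD0 : 0 ≤ D) (hDC : D ≤ C)
    (hD : ∀ x ∈ I, ∀ x' ∈ I, (u x - u' x) - (u x' - u' x') ≤ D) (y y' : ℝ) :
    (sinkhornMap f r c u y - sinkhornMap f r c u' y) -
        (sinkhornMap f r c u y' - sinkhornMap f r c u' y') ≤ contractionRatio θ C ^ 2 * D := by
  have hθ : 1 ≤ θ := one_le_of_forall_le_mul hfpos fun x y y' ↦ hfθ x y x y'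
  have hρ1 := (contractionRatio_lt_one hθ hC).le
  have hf' : Continuous (uncurry (flip f)) := hf.comp continuous_swap
  rw [sq, mul_assoc]
  refine sinkhornStep_sub_sub_le_mul hf hfpos (fun x y y' ↦ hfθ x y x y')
    (continuous_sinkhornStep hf' (fun x y ↦ hfpos y x) hc hcpos hu)
    (continuous_sinkhornStep hf' (fun x y ↦ hfpos y x) hc hcpos hu') hC
    (mul_nonneg (contractionRatio_nonneg hθ hC) hD0) ((mul_le_of_le_one_left hD0 hρ1).trans hDC)
    (fun x _ x' _ ↦ ?_) y y'
  exact sinkhornStep_sub_sub_le_mul hf' (fun x y ↦ hfpos y x) (fun x y y' ↦ hfθ y x y' x) hu hu'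
    hC hD0 hDC hD x x'

theorem sinkhornMap_IccExtend_sub_sub_le (hf : Continuous (uncurry f))
    (hfpos : ∀ x y, 0 < f x y) (hfθ : ∀ x y x' y', f x y ≤ θ * f x' y') (hc : Continuous c)
    (hcpos : ∀ x, 0 < c x) (w w' : C(I, ℝ)) {C : ℝ} (hC : 0 < C)
    (hDC : Metric.diam (range (w - w')) ≤ C) (y y' : ℝ) :
    (sinkhornMap f r c (IccExtend zero_le_one w) y -
        sinkhornMap f r c (IccExtend zero_le_one w') y) -
      (sinkhornMap f r c (IccExtend zero_le_one w) y' -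
        sinkhornMap f r c (IccExtend zero_le_one w') y') ≤
      contractionRatio θ C ^ 2 * Metric.diam (range (w - w')) :=
  sinkhornMap_sub_sub_le hf hfpos hfθ hc hcpos w.continuous.Icc_extend'
    w'.continuous.Icc_extend' hC Metric.diam_nonneg hDC (fun x hx x' hx' ↦ by
      simpa only [IccExtend_of_mem _ _ hx, IccExtend_of_mem _ _ hx', ContinuousMap.sub_apply]
        using (w - w').sub_le_diam_range ⟨x, hx⟩ ⟨x', hx'⟩) y y'

end SinkhornMap

section FixedPoint

variable {f : ℝ → ℝ → ℝ} {r c : ℝ → ℝ} {θ : ℝ}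

theorem exists_abs_sinkhornMap_sub_le (hf : Continuous (uncurry f)) (hfpos : ∀ x y, 0 < f x y)
    (hfθ : ∀ x y x' y', f x y ≤ θ * f x' y') (hr : Continuous r) (hrpos : ∀ y, 0 < r y)
    (hc : Continuous c) (hcpos : ∀ x, 0 < c x) :
    ∃ R, 0 ≤ R ∧ ∀ u, Continuous u → ∀ y ∈ I,
      |sinkhornMap f r c u y - sinkhornMap f r c u 0| ≤ R := by
  obtain ⟨B, hB⟩ := isCompact_Icc.exists_bound_of_continuousOn
    (hr.log fun y ↦ (hrpos y).ne').continuousOn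
  have hθ : 0 ≤ log θ := log_nonneg (one_le_of_forall_le_mul hfpos fun x y y' ↦ hfθ x y x y')
  have hlog : ∀ y ∈ I, |log (r y)| ≤ B := fun y hy ↦ by simpa using hB y hy
  refine ⟨2 * B + log θ, by linarith [(abs_nonneg _).trans (hlog 0 zero_mem)], ?_⟩
  intro u hu y hy
  have h₁ := sinkhornMap_sub_le (r := r) hf hfpos hfθ hc hcpos hu y 0
  have h₂ := sinkhornMap_sub_le (r := r) hf hfpos hfθ hc hcpos hu 0 y
  have := abs_le.1 (hlog y hy)
  have := abs_le.1 (hlog 0 zero_mem)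
  exact abs_le.2 ⟨by linarith, by linarith⟩

theorem existsUnique_sinkhornMap_sub_eq (hf : Continuous (uncurry f))
    (hfpos : ∀ x y, 0 < f x y) (hfθ : ∀ x y x' y', f x y ≤ θ * f x' y') (hr : Continuous r)
    (hrpos : ∀ y, 0 < r y) (hc : Continuous c) (hcpos : ∀ x, 0 < c x) :
    ∃! w : C(I, ℝ), ∀ y : I, sinkhornMap f r c (IccExtend zero_le_one w) y -
      sinkhornMap f r c (IccExtend zero_le_one w) 0 = w y := by
  obtain ⟨R, hR, hbound⟩ := exists_abs_sinkhornMap_sub_le hf hfpos hfθ hr hrpos hc hcpos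
  have hθ : 1 ≤ θ := one_le_of_forall_le_mul hfpos fun x y y' ↦ hfθ x y x y'
  have hext : ∀ w : C(I, ℝ), Continuous (IccExtend zero_le_one w) :=
    fun w ↦ w.continuous.Icc_extend'
  let Φ : C(I, ℝ) → C(I, ℝ) := fun w ↦
    ⟨fun y ↦ sinkhornMap f r c (IccExtend zero_le_one w) y -
      sinkhornMap f r c (IccExtend zero_le_one w) 0,
      ((continuous_sinkhornMap hf hfpos hr hrpos hc hcpos (hext w)).comp
        continuous_subtype_val).sub continuous_const⟩
  let X : Set C(I, ℝ) := {w | w 0 = 0 ∧ ‖w‖ ≤ R}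
  have hΦX : ∀ w, Φ w ∈ X := fun w ↦ ⟨sub_self _, (ContinuousMap.norm_le _ hR).2 fun y ↦
    (Real.norm_eq_abs _).trans_le (hbound _ (hext w) y y.2)⟩
  have hX : IsClosed X := (isClosed_eq (continuous_eval_const 0) continuous_const).inter
    (isClosed_le continuous_norm continuous_const)
  -- Differences of elements of `X` have oscillation at most `4 * R < C`.
  set C := 4 * R + 1
  have hC : 0 < C := by positivity
  have hcontr : ∀ w ∈ X, ∀ w' ∈ X, Metric.diam (range (Φ w - Φ w')) ≤
      contractionRatio θ C ^ 2 * Metric.diam (range (w - w')) := by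
    intro w hw w' hw'
    have := sinkhornMap_IccExtend_sub_sub_le (r := r) hf hfpos hfθ hc hcpos w w' hC (by
      linarith [(w - w').diam_range_le_two_mul_norm, norm_sub_le w w', hw.2, hw'.2])
    refine Metric.diam_le_of_forall_dist_le (by positivity) ?_
    rintro _ ⟨y, rfl⟩ _ ⟨y', rfl⟩
    rw [Real.dist_eq, abs_le]
    constructor <;> simp only [ContinuousMap.sub_apply, ContinuousMap.coe_mk, Φ] <;>
      linarith [this y y', this y' y]
  obtain ⟨w, hw, hw_unique⟩ := exists_unique_isFixedPt_of_mapsTo_gauge hX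
    ⟨0, rfl, by simpa using hR⟩ hΦX (d := fun w w' ↦ Metric.diam (range (w - w'))) (K := 2)
    (pow_nonneg (contractionRatio_nonneg hθ hC) 2)
    (pow_lt_one₀ (contractionRatio_nonneg hθ hC) (contractionRatio_lt_one hθ hC) two_ne_zero)
    (fun w hw w' hw' ↦ (dist_eq_norm w w').trans_le <| ContinuousMap.norm_le_diam_range
      (x₀ := 0) (by simp [hw.1, hw'.1]))
    (fun w _ w' _ ↦ dist_eq_norm w w' ▸ (w - w').diam_range_le_two_mul_norm) hcontr
  exact ⟨w, ContinuousMap.ext_iff.1 hw, fun v hv ↦ hw_unique v (ContinuousMap.ext hv)⟩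

end FixedPoint

structure IsScaling (f : ℝ → ℝ → ℝ) (r c h₁ h₂ : ℝ → ℝ) : Prop where
  continuousOn_left : ContinuousOn h₁ I
  continuousOn_right : ContinuousOn h₂ I
  pos_left : ∀ x ∈ I, 0 < h₁ x
  pos_right : ∀ y ∈ I, 0 < h₂ y
  integral_dx : ∀ y ∈ I, ∫ x in (0 : ℝ)..1, h₁ x * f x y * h₂ y = r y
  integral_dy : ∀ x ∈ I, ∫ y in (0 : ℝ)..1, h₁ x * f x y * h₂ y = c x

namespace IsScaling

variable {f f' : ℝ → ℝ → ℝ} {r r' c c' h₁ h₂ h₁' h₂' : ℝ → ℝ}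

theorem congr (hs : IsScaling f r c h₁ h₂) (hf : ∀ x ∈ I, ∀ y ∈ I, f x y = f' x y)
    (hr : ∀ y ∈ I, r y = r' y) (hc : ∀ x ∈ I, c x = c' x) : IsScaling f' r' c' h₁ h₂ where
  continuousOn_left := hs.continuousOn_left
  continuousOn_right := hs.continuousOn_right
  pos_left := hs.pos_left
  pos_right := hs.pos_right
  integral_dx y hy := by
    rw [← hr y hy, ← hs.integral_dx y hy]
    refine intervalIntegral.integral_congr fun x hx ↦ ?_
    rw [uIcc_of_le zero_le_one] at hx
    simp only [hf x hx y hy]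
  integral_dy x hx := by
    rw [← hc x hx, ← hs.integral_dy x hx]
    refine intervalIntegral.integral_congr fun y hy ↦ ?_
    rw [uIcc_of_le zero_le_one] at hy
    simp only [hf x hx y hy]

theorem congr_right (hs : IsScaling f r c h₁ h₂) (h : ∀ y ∈ I, h₂ y = h₂' y) :
    IsScaling f r c h₁ h₂' where
  continuousOn_left := hs.continuousOn_left
  continuousOn_right := hs.continuousOn_right.congr fun y hy ↦ (h y hy).symm
  pos_left := hs.pos_left
  pos_right y hy := h y hy ▸ hs.pos_right y hy
  integral_dx y hy := by simp only [← h y hy, hs.integral_dx y hy]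
  integral_dy x hx := by
    rw [← hs.integral_dy x hx]
    refine intervalIntegral.integral_congr fun y hy ↦ ?_
    rw [uIcc_of_le zero_le_one] at hy
    simp only [h y hy]

theorem smul (hs : IsScaling f r c h₁ h₂) {a : ℝ} (ha : 0 < a) :
    IsScaling f r c (fun x ↦ a * h₁ x) (fun y ↦ h₂ y / a) where
  continuousOn_left := continuousOn_const.mul hs.continuousOn_left
  continuousOn_right := hs.continuousOn_right.div_const a
  pos_left x hx := mul_pos ha (hs.pos_left x hx)
  pos_right y hy := div_pos (hs.pos_right y hy) ha
  integral_dx y hy := by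
    rw [← hs.integral_dx y hy]
    congr 1 with x
    field_simp
  integral_dy x hx := by
    rw [← hs.integral_dy x hx]
    congr 1 with y
    field_simp

theorem swap (hs : IsScaling f r c h₁ h₂) (hsym : ∀ x y, f x y = f y x) :
    IsScaling f c r h₂ h₁ where
  continuousOn_left := hs.continuousOn_right
  continuousOn_right := hs.continuousOn_left
  pos_left := hs.pos_right
  pos_right := hs.pos_left
  integral_dx y hy := by
    rw [← hs.integral_dy y hy]
    congr 1 with x
    rw [hsym]; ring
  integral_dy x hx := by
    rw [← hs.integral_dx x hx]
    congr 1 with y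
    rw [hsym]; ring

theorem left_eq (hs : IsScaling f r c h₁ h₂) (hs' : IsScaling f r c h₁' h₂)
    (hcpos : ∀ x ∈ I, 0 < c x) : ∀ x ∈ I, h₁ x = h₁' x := by
  intro x hx
  have hint : ∀ h : ℝ → ℝ, ∫ y in (0 : ℝ)..1, h x * f x y * h₂ y =
      h x * ∫ y in (0 : ℝ)..1, f x y * h₂ y := fun h ↦ by
    simp only [mul_assoc, intervalIntegral.integral_const_mul]
  have h := hs.integral_dy x hx
  have h' := hs'.integral_dy x hx
  rw [hint] at h h'
  have hA : (∫ y in (0 : ℝ)..1, f x y * h₂ y) ≠ 0 := by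
    rintro hA
    rw [hA, mul_zero] at h
    exact (hcpos x hx).ne h
  exact mul_right_cancel₀ hA (h.trans h'.symm)

end IsScaling

section Scaling

variable {f : ℝ → ℝ → ℝ} {r c h₁ h₂ : ℝ → ℝ}

theorem sinkhornStep_eq_log {k : ℝ → ℝ → ℝ} {g u h : ℝ → ℝ} {a y : ℝ}
    (hu : ∀ x ∈ I, exp (u x) = h x) (ha : 0 < a) (hgy : 0 < g y)
    (hint : a * ∫ x in (0 : ℝ)..1, k x y * h x = g y) : sinkhornStep k g u y = log a := by
  have hA : ∫ x in (0 : ℝ)..1, k x y * exp (u x) = ∫ x in (0 : ℝ)..1, k x y * h x :=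
    intervalIntegral.integral_congr fun x hx ↦ by
      rw [uIcc_of_le zero_le_one] at hx
      simp only [hu x hx]
  have hApos : 0 < ∫ x in (0 : ℝ)..1, k x y * h x := pos_of_mul_pos_right (hint ▸ hgy) ha.le
  rw [sinkhornStep, hA, ← hint, log_mul ha.ne' hApos.ne', add_sub_cancel_right]

theorem IsScaling.sinkhornMap_eq {U : ℝ → ℝ} (hs : IsScaling f r c h₁ h₂)
    (hrpos : ∀ y ∈ I, 0 < r y) (hcpos : ∀ x ∈ I, 0 < c x) (hU : ∀ y ∈ I, U y = log (h₂ y))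
    {y : ℝ} (hy : y ∈ I) : sinkhornMap f r c U y = U y := by
  have hinner : ∀ x ∈ I, sinkhornStep (flip f) c U x = log (h₁ x) := fun x hx ↦
    sinkhornStep_eq_log (fun y hy ↦ by rw [hU y hy, exp_log (hs.pos_right y hy)])
      (hs.pos_left x hx) (hcpos x hx) <| by
        rw [← hs.integral_dy x hx, ← intervalIntegral.integral_const_mul]
        simp only [flip, mul_assoc]
  rw [hU y hy]
  exact sinkhornStep_eq_log (fun x hx ↦ by rw [hinner x hx, exp_log (hs.pos_left x hx)])
    (hs.pos_right y hy) (hrpos y hy) <| by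
      rw [← hs.integral_dx y hy, ← intervalIntegral.integral_const_mul]
      congr 1 with x
      ring

theorem eq_one_of_integral_marginals {p : ℝ → ℝ → ℝ} {r c : ℝ → ℝ} {a : ℝ}
    (hp : Continuous (uncurry p)) (hr : 0 < ∫ y in (0 : ℝ)..1, r y)
    (hmass : ∫ y in (0 : ℝ)..1, r y = ∫ x in (0 : ℝ)..1, c x)
    (hdx : ∀ y ∈ I, ∫ x in (0 : ℝ)..1, p x y = a * r y)
    (hdy : ∀ x ∈ I, ∫ y in (0 : ℝ)..1, p x y = c x) : a = 1 := by
  have hswap := intervalIntegral_intervalIntegral_swap (a := 0) (b := 1) (c := 0) (d := 1)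
    (F := p) <| by
      simp only [uIoc_of_le zero_le_one]
      exact hp.continuousOn.integrableOn_compact (isCompact_Icc.prod isCompact_Icc)
        |>.mono_set (prod_mono Ioc_subset_Icc_self Ioc_subset_Icc_self)
  have hI : ∀ {z}, z ∈ uIcc (0 : ℝ) 1 → z ∈ I := fun hz ↦ by rwa [uIcc_of_le zero_le_one] at hz
  rw [intervalIntegral.integral_congr fun x hx ↦ hdy x (hI hx),
    intervalIntegral.integral_congr fun y hy ↦ hdx y (hI hy),
    intervalIntegral.integral_const_mul, ← hmass] at hswap
  exact (mul_eq_right₀ hr.ne').1 hswap.symm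

theorem isScaling_of_sinkhornMap_eq (hf : Continuous (uncurry f)) (hfpos : ∀ x y, 0 < f x y)
    (hr : Continuous r) (hrpos : ∀ y, 0 < r y) (hc : Continuous c) (hcpos : ∀ x, 0 < c x)
    (hmass : ∫ y in (0 : ℝ)..1, r y = ∫ x in (0 : ℝ)..1, c x) {U : ℝ → ℝ} (hU : Continuous U)
    {β : ℝ} (hfix : ∀ y ∈ I, sinkhornMap f r c U y = U y + β) :
    IsScaling f r c (fun x ↦ exp (sinkhornStep (flip f) c U x)) (fun y ↦ exp (U y)) := by
  set v := sinkhornStep (flip f) c U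
  have hv : Continuous v :=
    continuous_sinkhornStep (hf.comp continuous_swap) (fun x y ↦ hfpos y x) hc hcpos hU
  have hdy : ∀ x, ∫ y in (0 : ℝ)..1, exp (v x) * f x y * exp (U y) = c x := fun x ↦ by
    simp only [mul_assoc, intervalIntegral.integral_const_mul]
    exact exp_sinkhornStep_mul_integral (k := flip f) (hf.comp continuous_swap)
      (fun x y ↦ hfpos y x) hU (hcpos x)
  have hdx : ∀ y ∈ I, ∫ x in (0 : ℝ)..1, exp (v x) * f x y * exp (U y) = exp (-β) * r y := by
    intro y hy
    rw [← exp_sinkhornStep_mul_integral hf hfpos hv (hrpos y), ← sinkhornMap, hfix y hy,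
      exp_add, exp_neg]
    simp only [mul_comm (exp (v _)), intervalIntegral.integral_mul_const]
    field_simp
  have hβ : exp (-β) = 1 := eq_one_of_integral_marginals
    (p := fun x y ↦ exp (v x) * f x y * exp (U y))
    (((continuous_exp.comp (hv.comp continuous_fst)).mul hf).mul
      (continuous_exp.comp (hU.comp continuous_snd)))
    (intervalIntegral.intervalIntegral_pos_of_pos_on (hr.intervalIntegrable 0 1)
      (fun y _ ↦ hrpos y) zero_lt_one) hmass hdx fun x _ ↦ hdy x
  exact {
    continuousOn_left := (continuous_exp.comp hv).continuousOn
    continuousOn_right := (continuous_exp.comp hU).continuousOn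
    pos_left := fun x _ ↦ exp_pos _
    pos_right := fun y _ ↦ exp_pos _
    integral_dx := fun y hy ↦ by rw [hdx y hy, hβ, one_mul]
    integral_dy := fun x _ ↦ hdy x }

end Scaling

theorem exists_isScaling_of_continuous {f : ℝ → ℝ → ℝ} {r c : ℝ → ℝ} {θ : ℝ}
    (hf : Continuous (uncurry f)) (hfpos : ∀ x y, 0 < f x y)
    (hfθ : ∀ x y x' y', f x y ≤ θ * f x' y') (hr : Continuous r) (hrpos : ∀ y, 0 < r y)
    (hc : Continuous c) (hcpos : ∀ x, 0 < c x)
    (hmass : ∫ y in (0 : ℝ)..1, r y = ∫ x in (0 : ℝ)..1, c x) :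
    ∃ h₁ h₂, IsScaling f r c h₁ h₂ ∧ ∀ h₁' h₂', IsScaling f r c h₁' h₂' →
      ∃ α, 0 < α ∧ (∀ x ∈ I, h₁' x = α * h₁ x) ∧ ∀ y ∈ I, α * h₂' y = h₂ y := by
  obtain ⟨w, hw, hw_unique⟩ := existsUnique_sinkhornMap_sub_eq hf hfpos hfθ hr hrpos hc hcpos
  set U := IccExtend zero_le_one w
  have hs := isScaling_of_sinkhornMap_eq hf hfpos hr hrpos hc hcpos hmass (U := U)
    (β := sinkhornMap f r c U 0) w.continuous.Icc_extend' fun y hy ↦ by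
      linarith [hw ⟨y, hy⟩, IccExtend_of_mem zero_le_one w hy]
  refine ⟨_, _, hs, fun h₁' h₂' hs' ↦ ?_⟩
  -- Normalise `h₂'` to `1` at `0`; its logarithm is then the fixed point `w`.
  have ha : 0 < h₂' 0 := hs'.pos_right 0 zero_mem
  have hs'' := hs'.smul ha
  have hlog : ContinuousOn (fun y ↦ log (h₂' y / h₂' 0)) I :=
    hs''.continuousOn_right.log fun y hy ↦ (hs''.pos_right y hy).ne'
  let W : C(I, ℝ) := ⟨_, continuousOn_iff_continuous_domRestrict.1 hlog⟩
  have hWU : W = w := hw_unique W fun y ↦ by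
    have hfix : ∀ y ∈ I, sinkhornMap f r c (IccExtend zero_le_one W) y =
        IccExtend zero_le_one W y := fun y hy ↦ hs''.sinkhornMap_eq (fun y _ ↦ hrpos y)
      (fun x _ ↦ hcpos x) (fun y hy ↦ IccExtend_of_mem zero_le_one W hy) hy
    rw [hfix y y.2, hfix 0 zero_mem, IccExtend_of_mem zero_le_one W y.2,
      IccExtend_of_mem zero_le_one W zero_mem]
    simp [W, div_self ha.ne']
  have hh₂ : ∀ y ∈ I, h₂' y / h₂' 0 = exp (U y) := fun y hy ↦ by
    rw [show U y = w ⟨y, hy⟩ from IccExtend_of_mem zero_le_one w hy, ← hWU]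
    exact (exp_log (hs''.pos_right y hy)).symm
  have hh₁ := (hs''.congr_right hh₂).left_eq hs fun x _ ↦ hcpos x
  refine ⟨(h₂' 0)⁻¹, inv_pos.2 ha, fun x hx ↦ ?_, fun y hy ↦ ?_⟩
  · rw [← hh₁ x hx, inv_mul_cancel_left₀ ha.ne']
  · rw [← hh₂ y hy, inv_mul_eq_div]

theorem exists_isScaling {f : ℝ → ℝ → ℝ} {r c : ℝ → ℝ} (hf : ContinuousOn (uncurry f) (I ×ˢ I))
    (hfpos : ∀ x ∈ I, ∀ y ∈ I, 0 < f x y) (hr : ContinuousOn r I) (hrpos : ∀ y ∈ I, 0 < r y)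
    (hc : ContinuousOn c I) (hcpos : ∀ x ∈ I, 0 < c x)
    (hmass : ∫ y in (0 : ℝ)..1, r y = ∫ x in (0 : ℝ)..1, c x) :
    ∃ h₁ h₂, IsScaling f r c h₁ h₂ ∧ ∀ h₁' h₂', IsScaling f r c h₁' h₂' →
      ∃ α, 0 < α ∧ (∀ x ∈ I, h₁' x = α * h₁ x) ∧ ∀ y ∈ I, α * h₂' y = h₂ y := by
  let P : ℝ → ℝ := fun x ↦ projIcc (0 : ℝ) 1 zero_le_one x
  have hP : Continuous P := continuous_subtype_val.comp continuous_projIcc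
  have hPI : ∀ x, P x ∈ I := fun x ↦ Subtype.prop _
  have hPid : ∀ x ∈ I, P x = x := fun x hx ↦ congrArg Subtype.val (projIcc_of_mem zero_le_one hx)
  have hfP : ∀ x ∈ I, ∀ y ∈ I, f (P x) (P y) = f x y := fun x hx y hy ↦ by
    rw [hPid x hx, hPid y hy]
  have hrP : ∀ y ∈ I, r (P y) = r y := fun y hy ↦ by rw [hPid y hy]
  have hcP : ∀ x ∈ I, c (P x) = c x := fun x hx ↦ by rw [hPid x hx]
  have hint : ∀ {g : ℝ → ℝ}, (∀ x ∈ I, g (P x) = g x) →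
      ∫ x in (0 : ℝ)..1, g (P x) = ∫ x in (0 : ℝ)..1, g x := fun hg ↦
    intervalIntegral.integral_congr fun x hx ↦ hg x (by rwa [uIcc_of_le zero_le_one] at hx)
  obtain ⟨θ, hθ⟩ := (isCompact_Icc.prod isCompact_Icc).exists_forall_le_mul hf
    fun p hp ↦ hfpos _ hp.1 _ hp.2
  obtain ⟨h₁, h₂, hs, huniq⟩ := exists_isScaling_of_continuous (f := fun x y ↦ f (P x) (P y))
    (r := fun y ↦ r (P y)) (c := fun x ↦ c (P x))
    (hf.comp_continuous (hP.prodMap hP) fun p ↦ ⟨hPI _, hPI _⟩)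
    (fun x y ↦ hfpos _ (hPI x) _ (hPI y))
    (fun x y x' y' ↦ hθ (P x, P y) ⟨hPI x, hPI y⟩ (P x', P y') ⟨hPI x', hPI y'⟩)
    (hr.comp_continuous hP hPI) (fun y ↦ hrpos _ (hPI y)) (hc.comp_continuous hP hPI)
    (fun x ↦ hcpos _ (hPI x)) (by rw [hint hrP, hint hcP, hmass])
  refine ⟨h₁, h₂, hs.congr hfP hrP hcP, fun h₁' h₂' hs' ↦ huniq h₁' h₂' ?_⟩
  exact hs'.congr (fun x hx y hy ↦ (hfP x hx y hy).symm) (fun y hy ↦ (hrP y hy).symm)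
    fun x hx ↦ (hcP x hx).symm

theorem exists_isScaling_self_of_symmetric {f : ℝ → ℝ → ℝ} {r h₁ h₂ : ℝ → ℝ}
    (hsym : ∀ x y, f x y = f y x) (hs : IsScaling f r r h₁ h₂)
    (huniq : ∀ h₁' h₂', IsScaling f r r h₁' h₂' →
      ∃ α, 0 < α ∧ (∀ x ∈ I, h₁' x = α * h₁ x) ∧ ∀ y ∈ I, α * h₂' y = h₂ y) :
    ∃ h, IsScaling f r r h h ∧ ∀ h', IsScaling f r r h' h' → ∀ x ∈ I, h' x = h x := by
  obtain ⟨α, hα, h₂₁, -⟩ := huniq h₂ h₁ (hs.swap hsym)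
  have hsq : 0 < √α := sqrt_pos.2 hα
  refine ⟨fun x ↦ √α * h₁ x, (hs.smul hsq).congr_right fun y hy ↦ ?_, fun h' hs' x hx ↦ ?_⟩
  · rw [h₂₁ y hy, div_eq_iff hsq.ne', mul_right_comm, mul_self_sqrt hα.le]
  · obtain ⟨β, hβ, hβ₁, hβ₂⟩ := huniq h' h' hs'
    have : β * β = α := mul_right_cancel₀ (hs.pos_left x hx).ne' <| by
      rw [mul_assoc, ← hβ₁ x hx, hβ₂ x hx, h₂₁ x hx]
    rw [hβ₁ x hx, ← this, sqrt_mul_self hβ.le]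

theorem continuous_scaling_general (f : ℝ → ℝ → ℝ)
    (hfc : ContinuousOn (fun p : ℝ × ℝ => f p.1 p.2)
      (Set.Icc 0 1 ×ˢ Set.Icc 0 1))
    (hfpos : ∀ x ∈ Set.Icc (0:ℝ) 1, ∀ y ∈ Set.Icc (0:ℝ) 1, 0 < f x y)
    (r c : ℝ → ℝ)
    (hrc : ContinuousOn r (Set.Icc 0 1)) (hcc : ContinuousOn c (Set.Icc 0 1))
    (hrpos : ∀ y ∈ Set.Icc (0:ℝ) 1, 0 < r y)
    (hcpos : ∀ x ∈ Set.Icc (0:ℝ) 1, 0 < c x)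
    (hmass : (∫ y in (0:ℝ)..1, r y) = ∫ x in (0:ℝ)..1, c x) :
    (∃ h₁ h₂ : ℝ → ℝ,
      ContinuousOn h₁ (Set.Icc 0 1) ∧ ContinuousOn h₂ (Set.Icc 0 1) ∧
      (∀ x ∈ Set.Icc (0:ℝ) 1, 0 < h₁ x) ∧ (∀ y ∈ Set.Icc (0:ℝ) 1, 0 < h₂ y) ∧
      (∀ y ∈ Set.Icc (0:ℝ) 1, ∫ x in (0:ℝ)..1, h₁ x * f x y * h₂ y = r y) ∧
      (∀ x ∈ Set.Icc (0:ℝ) 1, ∫ y in (0:ℝ)..1, h₁ x * f x y * h₂ y = c x) ∧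
      (∀ h₁' h₂' : ℝ → ℝ,
        ContinuousOn h₁' (Set.Icc 0 1) → ContinuousOn h₂' (Set.Icc 0 1) →
        (∀ x ∈ Set.Icc (0:ℝ) 1, 0 < h₁' x) →
        (∀ y ∈ Set.Icc (0:ℝ) 1, 0 < h₂' y) →
        (∀ y ∈ Set.Icc (0:ℝ) 1, ∫ x in (0:ℝ)..1, h₁' x * f x y * h₂' y = r y) →
        (∀ x ∈ Set.Icc (0:ℝ) 1, ∫ y in (0:ℝ)..1, h₁' x * f x y * h₂' y = c x) →
        ∃ α : ℝ, 0 < α ∧ (∀ x ∈ Set.Icc (0:ℝ) 1, h₁' x = α * h₁ x) ∧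
          (∀ y ∈ Set.Icc (0:ℝ) 1, α * h₂' y = h₂ y)))
    ∧
    ((∀ x y, f x y = f y x) → r = c →
      ∃ h : ℝ → ℝ, ContinuousOn h (Set.Icc 0 1) ∧
        (∀ x ∈ Set.Icc (0:ℝ) 1, 0 < h x) ∧
        (∀ y ∈ Set.Icc (0:ℝ) 1, ∫ x in (0:ℝ)..1, h x * f x y * h y = r y) ∧
        (∀ x ∈ Set.Icc (0:ℝ) 1, ∫ y in (0:ℝ)..1, h x * f x y * h y = r x) ∧
        (∀ h' : ℝ → ℝ, ContinuousOn h' (Set.Icc 0 1) →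
          (∀ x ∈ Set.Icc (0:ℝ) 1, 0 < h' x) →
          (∀ y ∈ Set.Icc (0:ℝ) 1, ∫ x in (0:ℝ)..1, h' x * f x y * h' y = r y) →
          (∀ x ∈ Set.Icc (0:ℝ) 1, ∫ y in (0:ℝ)..1, h' x * f x y * h' y = r x) →
          ∀ x ∈ Set.Icc (0:ℝ) 1, h' x = h x)) := by
  obtain ⟨h₁, h₂, hs, huniq⟩ := exists_isScaling hfc hfpos hrc hrpos hcc hcpos hmass
  refine ⟨⟨h₁, h₂, hs.continuousOn_left, hs.continuousOn_right, hs.pos_left, hs.pos_right,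
    hs.integral_dx, hs.integral_dy, fun h₁' h₂' hc₁ hc₂ hp₁ hp₂ hdx hdy ↦
      huniq h₁' h₂' ⟨hc₁, hc₂, hp₁, hp₂, hdx, hdy⟩⟩, fun hsym hrc ↦ ?_⟩
  subst hrc
  obtain ⟨h, hh, hh_unique⟩ := exists_isScaling_self_of_symmetric hsym hs huniq
  exact ⟨h, hh.continuousOn_left, hh.pos_left, hh.integral_dx, hh.integral_dy,
    fun h' hc hp hdx hdy ↦ hh_unique h' ⟨hc, hc, hp, hp, hdx, hdy⟩⟩

/-- continuous density scaling: a bounded, continuous, strictly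
positive density on the unit square can be scaled by positive functions h₁, h₂
to attain prescribed positive continuous marginals r and c with equal total
mass; the pair (h₁, h₂) is unique up to a scalar factor. In particular, in the
symmetric case with r = c = m, there is a unique positive balancing function. -/
theorem continuous_scaling (f : ℝ → ℝ → ℝ)
    (hfc : ContinuousOn (fun p : ℝ × ℝ => f p.1 p.2)
      (Set.Icc 0 1 ×ˢ Set.Icc 0 1))
    (hfb : ∃ B : ℝ, ∀ x ∈ Set.Icc (0:ℝ) 1, ∀ y ∈ Set.Icc (0:ℝ) 1, f x y ≤ B)
    (hfpos : ∀ x ∈ Set.Icc (0:ℝ) 1, ∀ y ∈ Set.Icc (0:ℝ) 1, 0 < f x y)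
    (r c : ℝ → ℝ)
    (hrc : ContinuousOn r (Set.Icc 0 1)) (hcc : ContinuousOn c (Set.Icc 0 1))
    (hrpos : ∀ y ∈ Set.Icc (0:ℝ) 1, 0 < r y)
    (hcpos : ∀ x ∈ Set.Icc (0:ℝ) 1, 0 < c x)
    (hmass : (∫ y in (0:ℝ)..1, r y) = ∫ x in (0:ℝ)..1, c x) :
    (∃ h₁ h₂ : ℝ → ℝ,
      ContinuousOn h₁ (Set.Icc 0 1) ∧ ContinuousOn h₂ (Set.Icc 0 1) ∧
      (∀ x ∈ Set.Icc (0:ℝ) 1, 0 < h₁ x) ∧ (∀ y ∈ Set.Icc (0:ℝ) 1, 0 < h₂ y) ∧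
      (∀ y ∈ Set.Icc (0:ℝ) 1, ∫ x in (0:ℝ)..1, h₁ x * f x y * h₂ y = r y) ∧
      (∀ x ∈ Set.Icc (0:ℝ) 1, ∫ y in (0:ℝ)..1, h₁ x * f x y * h₂ y = c x) ∧
      (∀ h₁' h₂' : ℝ → ℝ,
        ContinuousOn h₁' (Set.Icc 0 1) → ContinuousOn h₂' (Set.Icc 0 1) →
        (∀ x ∈ Set.Icc (0:ℝ) 1, 0 < h₁' x) →
        (∀ y ∈ Set.Icc (0:ℝ) 1, 0 < h₂' y) →
        (∀ y ∈ Set.Icc (0:ℝ) 1, ∫ x in (0:ℝ)..1, h₁' x * f x y * h₂' y = r y) →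
        (∀ x ∈ Set.Icc (0:ℝ) 1, ∫ y in (0:ℝ)..1, h₁' x * f x y * h₂' y = c x) →
        ∃ α : ℝ, 0 < α ∧ (∀ x ∈ Set.Icc (0:ℝ) 1, h₁' x = α * h₁ x) ∧
          (∀ y ∈ Set.Icc (0:ℝ) 1, α * h₂' y = h₂ y)))
    ∧
    ((∀ x y, f x y = f y x) → r = c →
      ∃ h : ℝ → ℝ, ContinuousOn h (Set.Icc 0 1) ∧
        (∀ x ∈ Set.Icc (0:ℝ) 1, 0 < h x) ∧
        (∀ y ∈ Set.Icc (0:ℝ) 1, ∫ x in (0:ℝ)..1, h x * f x y * h y = r y) ∧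
        (∀ x ∈ Set.Icc (0:ℝ) 1, ∫ y in (0:ℝ)..1, h x * f x y * h y = r x) ∧
        (∀ h' : ℝ → ℝ, ContinuousOn h' (Set.Icc 0 1) →
          (∀ x ∈ Set.Icc (0:ℝ) 1, 0 < h' x) →
          (∀ y ∈ Set.Icc (0:ℝ) 1, ∫ x in (0:ℝ)..1, h' x * f x y * h' y = r y) →
          (∀ x ∈ Set.Icc (0:ℝ) 1, ∫ y in (0:ℝ)..1, h' x * f x y * h' y = r x) →
          ∀ x ∈ Set.Icc (0:ℝ) 1, h' x = h x)) :=
  continuous_scaling_general f hfc hfpos r c hrc hcc hrpos hcpos hmass
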